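/- arXiv:1008.5275 — 3 statements merged into one kernel-verified Lean document; each statement's English description precedes it below -/
import Mathlib

section
/- Every set C ⊂ ℝ^d of (d+1)(r−1)+1 points has r pairwise disjoint subsets A_1, …, A_r with ⋂_{i=1}^r conv(A_i) ≠ ∅ (Tverberg's theorem). -/
/-!
Sarkaria's proof. Let `v₀, …, v_k ∈ ℝᵏ` (with `r = k + 1`) be vectors whose only linear relations
are the constant ones, and send the `j`-th point `a_j` to the colour class
`{vᵢ ⊗ (1, a_j)}ᵢ ⊆ ℝᵏ ⊗ (ℝ × E)`, whose convex hull contains `0`. There are more classes than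
the dimension `k (dim E + 1)`, so Bárány's colourful Carathéodory theorem gives a colouring `σ`
and weights `w` with `∑ⱼ w_j v_{σ j} ⊗ (1, a_j) = 0`, i.e. `∑ᵢ vᵢ ⊗ Yᵢ = 0` for
`Yᵢ = ∑_{σ j = i} w_j (1, a_j)`. Hence all `Yᵢ` coincide, and their common normalised second
coordinate lies in the convex hull of every fibre of `σ`.

Colourful Carathéodory: take `x` of minimal norm in the union of the hulls of all transversals.
If `x ≠ 0`, all points of its transversal lie on the far side of the hyperplane
`⟪x, ·⟫ = ‖x‖²`, so by Carathéodory one colour can be dropped; replacing it by a point `c` of that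
colour with `⟪x, c⟫ ≤ 0` produces a hull containing both `x` and `c`, contradicting minimality.
-/

open Finset Set Module RealInnerProductSpace

lemma exists_apply_nonpos_of_zero_mem_convexHull {E : Type*} [AddCommGroup E] [Module ℝ E]
    {s : Set E} (h : (0 : E) ∈ convexHull ℝ s) (φ : E →ₗ[ℝ] ℝ) : ∃ c ∈ s, φ c ≤ 0 := by
  by_contra! hpos
  have : (0 : E) ∈ {c | 0 < φ c} := convexHull_min hpos (convex_halfSpace_gt φ.isLinear 0) h
  simp at this

lemma zero_mem_convexHull_image {V W : Type*} [AddCommGroup V] [Module ℝ V] [AddCommGroup W]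
    [Module ℝ W] (f : V →ₗ[ℝ] W) {s : Set V} (h : (0 : V) ∈ convexHull ℝ s) :
    (0 : W) ∈ convexHull ℝ (f '' s) :=
  f.image_convexHull s ▸ ⟨0, h, map_zero f⟩

lemma AffineIndependent.linearIndependent_of_forall_apply_eq {k V ι : Type*} [Field k]
    [AddCommGroup V] [Module k V] [Fintype ι] {z : ι → V} (hz : AffineIndependent k z)
    (φ : V →ₗ[k] k) {c : k} (hc : c ≠ 0) (hφ : ∀ i, φ (z i) = c) : LinearIndependent k z := by
  refine Fintype.linearIndependent_iff.2 fun g hg => ?_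
  have hsum : ∑ i, g i = 0 := by
    have := congrArg φ hg
    simp only [map_sum, map_smul, hφ, smul_eq_mul, map_zero, ← Finset.sum_mul] at this
    exact (mul_eq_zero.1 this).resolve_right hc
  exact fun i => hz.eq_zero_of_sum_eq_zero hsum hg i (mem_univ i)

section InnerProductSpace

variable {F : Type*} [NormedAddCommGroup F] [InnerProductSpace ℝ F]

lemma norm_sq_le_inner_of_isMinOn {K : Set F} (hK : Convex ℝ K) {x y : F} (hx : x ∈ K)
    (hy : y ∈ K) (hmin : IsMinOn (‖·‖) K x) : ‖x‖ ^ 2 ≤ ⟪x, y⟫ := by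
  have hinf : ‖0 - x‖ = ⨅ z : K, ‖0 - (z : F)‖ := by simpa using (hmin.iInf_eq hx).symm
  have := (norm_eq_iInf_iff_real_inner_le_zero hK hx).1 hinf y hy
  rw [zero_sub, inner_neg_left, inner_sub_right, real_inner_self_eq_norm_sq] at this
  linarith

lemma exists_mem_convexHull_image_compl_singleton [FiniteDimensional ℝ F] {κ : Type*}
    [Fintype κ] (hκ : finrank ℝ F < Fintype.card κ) {f : κ → F} {x : F} (hx0 : x ≠ 0)
    (hx : x ∈ convexHull ℝ (range f)) (hf : ∀ j, ‖x‖ ^ 2 ≤ ⟪x, f j⟫) :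
    ∃ j, x ∈ convexHull ℝ (f '' {j}ᶜ) := by
  obtain ⟨ι, _, z, w, hzf, hz, hw0, hw1, hwx⟩ := eq_pos_convex_span_of_mem_convexHull hx
  choose σ hσ using fun i => hzf (mem_range_self i)
  have hzx : ∀ i, ⟪x, z i⟫ = ‖x‖ ^ 2 := by
    have hterm : ∑ i, w i * (⟪x, z i⟫ - ‖x‖ ^ 2) = 0 := by
      simp only [mul_sub, sum_sub_distrib, ← sum_mul, hw1, one_mul, ← real_inner_smul_right,
        ← inner_sum, hwx, real_inner_self_eq_norm_sq, sub_self]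
    intro i
    have hle : ∀ i, 0 ≤ w i * (⟪x, z i⟫ - ‖x‖ ^ 2) := fun i =>
      mul_nonneg (hw0 i).le (sub_nonneg.2 (hσ i ▸ hf (σ i)))
    have := (sum_eq_zero_iff_of_nonneg fun i _ => hle i).1 hterm i (mem_univ i)
    linarith [(mul_eq_zero.1 this).resolve_left (hw0 i).ne']
  have hli := hz.linearIndependent_of_forall_apply_eq (innerₛₗ ℝ x)
    (pow_ne_zero 2 (norm_ne_zero_iff.2 hx0)) (by simpa using hzx)
  obtain ⟨j, hj⟩ : ∃ j, j ∉ range σ := by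
    by_contra! hσs
    exact (hli.fintype_card_le_finrank.trans_lt hκ).not_ge
      (Fintype.card_le_of_surjective σ fun j => hσs j)
  refine ⟨j, hwx ▸ (convex_convexHull ℝ _).sum_mem (fun i _ => (hw0 i).le) hw1 fun i _ =>
    subset_convexHull ℝ _ ⟨σ i, fun h => hj ⟨i, h⟩, hσ i⟩⟩

theorem exists_transversal_zero_mem_convexHull_of_inner [FiniteDimensional ℝ F] {κ : Type*}
    [Fintype κ] (hκ : finrank ℝ F < Fintype.card κ) (C : κ → Finset F)
    (hC : ∀ j, (0 : F) ∈ convexHull ℝ (C j : Set F)) :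
    ∃ t : κ → F, (∀ j, t j ∈ C j) ∧ (0 : F) ∈ convexHull ℝ (range t) := by
  classical
  let K : ((j : κ) → C j) → Set F := fun t => convexHull ℝ (range fun j => (t j : F))
  have hne : (⋃ t, K t).Nonempty := by
    obtain ⟨j₀⟩ : Nonempty κ := Fintype.card_pos_iff.1 (hκ.trans_le' (Nat.zero_le _))
    have hCne : ∀ j, (C j : Set F).Nonempty := fun j => convexHull_nonempty_iff.1 ⟨0, hC j⟩
    let t : (j : κ) → C j := fun j => ⟨_, (hCne j).some_mem⟩
    exact ⟨_, mem_iUnion.2 ⟨t, subset_convexHull ℝ _ (mem_range_self j₀)⟩⟩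
  have hK : IsCompact (⋃ t, K t) :=
    isCompact_iUnion fun t => (finite_range _).isCompact_convexHull (𝕜 := ℝ)
  obtain ⟨x, hxU, hmin⟩ := hK.exists_isMinOn hne continuous_norm.continuousOn
  have hmin' : ∀ t, IsMinOn (‖·‖) (K t) x := fun t => hmin.on_subset (subset_iUnion K t)
  obtain ⟨t, hxt⟩ := mem_iUnion.1 hxU
  obtain rfl | hx0 := eq_or_ne x 0
  · exact ⟨fun j => t j, fun j => (t j).2, hxt⟩
  exfalso
  obtain ⟨j, hj⟩ := exists_mem_convexHull_image_compl_singleton hκ hx0 hxt fun j =>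
    norm_sq_le_inner_of_isMinOn (convex_convexHull ℝ _) hxt
      (subset_convexHull ℝ _ (mem_range_self j)) (hmin' t)
  obtain ⟨c, hc, hxc⟩ := exists_apply_nonpos_of_zero_mem_convexHull (hC j) (innerₛₗ ℝ x)
  let t' := Function.update t j ⟨c, hc⟩
  have hxt' : x ∈ K t' := convexHull_mono (by
    rintro _ ⟨i, hi, rfl⟩
    exact ⟨i, by simp [t', Function.update_of_ne hi]⟩) hj
  have hct' : c ∈ K t' := subset_convexHull ℝ _ ⟨j, by simp [t']⟩
  have := norm_sq_le_inner_of_isMinOn (convex_convexHull ℝ _) hxt' hct' (hmin' t')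
  have : 0 < ‖x‖ ^ 2 := by positivity
  rw [innerₛₗ_apply_apply] at hxc
  linarith

end InnerProductSpace

theorem exists_transversal_zero_mem_convexHull {E : Type*} [AddCommGroup E] [Module ℝ E]
    [FiniteDimensional ℝ E] {κ : Type*} [Fintype κ] (hκ : finrank ℝ E < Fintype.card κ)
    (C : κ → Finset E) (hC : ∀ j, (0 : E) ∈ convexHull ℝ (C j : Set E)) :
    ∃ t : κ → E, (∀ j, t j ∈ C j) ∧ (0 : E) ∈ convexHull ℝ (range t) := by
  classical
  let e : E ≃ₗ[ℝ] EuclideanSpace ℝ (Fin (finrank ℝ E)) := LinearEquiv.ofFinrankEq _ _ (by simp)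
  obtain ⟨t, ht, ht0⟩ := exists_transversal_zero_mem_convexHull_of_inner (by simpa using hκ)
    (fun j => (C j).image e) fun j => by
      simpa using zero_mem_convexHull_image e.toLinearMap (hC j)
  refine ⟨e.symm ∘ t, fun j => ?_, by
    simpa [range_comp] using zero_mem_convexHull_image e.symm.toLinearMap ht0⟩
  obtain ⟨y, hy, hyt⟩ := Finset.mem_image.1 (ht j)
  simpa [← hyt] using hy

/-- The vectors `vᵢ`: the standard basis of `ℝᵏ`, followed by minus the sum of its vectors. -/
def sarkariaVector (k : ℕ) : Fin (k + 1) → Fin k → ℝ :=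
  Fin.lastCases (fun _ => -1) fun i => Pi.single i 1

lemma sum_sarkariaVector_smul {M : Type*} [AddCommGroup M] [Module ℝ M] {k : ℕ}
    (c : Fin (k + 1) → M) (m : Fin k) :
    ∑ i, sarkariaVector k i m • c i = c m.castSucc - c (Fin.last k) := by
  simp [Fin.sum_univ_castSucc, sarkariaVector, Pi.single_apply, sub_eq_add_neg]

lemma eq_last_of_sum_sarkariaVector_smul_eq_zero {M : Type*} [AddCommGroup M] [Module ℝ M]
    {k : ℕ} {c : Fin (k + 1) → M} (h : ∀ m, ∑ i, sarkariaVector k i m • c i = 0)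
    (i : Fin (k + 1)) : c i = c (Fin.last k) := by
  induction i using Fin.lastCases with
  | last => rfl
  | cast m => simpa [sum_sarkariaVector_smul, sub_eq_zero] using h m

theorem exists_iInter_convexHull_fiber_nonempty {E : Type*} [AddCommGroup E] [Module ℝ E]
    [FiniteDimensional ℝ E] {κ : Type*} [Fintype κ] (k : ℕ) (a : κ → E)
    (hκ : (finrank ℝ E + 1) * k < Fintype.card κ) :
    ∃ σ : κ → Fin (k + 1), (⋂ i, convexHull ℝ (a '' {j | σ j = i})).Nonempty := by
  classical
  -- `Fin k → ℝ × E` stands for `ℝᵏ ⊗ (ℝ × E)`, and `lift i p` for `vᵢ ⊗ (1, p)`.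
  let lift : Fin (k + 1) → E → Fin k → ℝ × E := fun i p m => sarkariaVector k i m • (1, p)
  have hdim : finrank ℝ (Fin k → ℝ × E) < Fintype.card κ := by
    rw [Module.finrank_pi_fintype]
    simpa [Module.finrank_prod, add_comm, mul_comm] using hκ
  have hsum : ∀ p, ∑ i, lift i p = 0 := fun p => funext fun m => by
    simpa [lift] using sum_sarkariaVector_smul (fun _ => ((1 : ℝ), p)) m
  have h0 : ∀ j,
      (0 : Fin k → ℝ × E) ∈ convexHull ℝ ↑(Finset.univ.image fun i => lift i (a j)) :=
    fun j => mem_convexHull_of_exists_fintype (fun _ => ((k : ℝ) + 1)⁻¹) (fun i => lift i (a j))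
      (fun _ => by positivity) (by
        simp only [sum_const, card_univ, Fintype.card_fin, nsmul_eq_mul, Nat.cast_add, Nat.cast_one]
        field_simp) (fun i => by simp)
      (by rw [← Finset.smul_sum, hsum, smul_zero])
  obtain ⟨t, ht, ht0⟩ := exists_transversal_zero_mem_convexHull hdim _ h0
  choose σ hσ using fun j => by simpa using ht j
  rw [convexHull_range_eq_exists_affineCombination] at ht0
  obtain ⟨s, w, hw0, hw1, hsw⟩ := ht0
  rw [Finset.affineCombination_eq_linear_combination _ _ _ hw1] at hsw
  let Y : Fin (k + 1) → ℝ × E := fun i => ∑ j ∈ s with σ j = i, w j • (1, a j)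
  have hY : ∀ i, Y i = Y (Fin.last k) := eq_last_of_sum_sarkariaVector_smul_eq_zero fun m =>
    calc ∑ i, sarkariaVector k i m • Y i = ∑ j ∈ s, w j • t j m := by
          rw [← Finset.sum_fiberwise s σ]
          refine Finset.sum_congr rfl fun i _ => ?_
          rw [Finset.smul_sum]
          refine Finset.sum_congr rfl fun j hj => ?_
          rw [← hσ, (Finset.mem_filter.1 hj).2, smul_comm]
      _ = 0 := by simpa using congrFun hsw m
  have hmass : 0 < (Y (Fin.last k)).1 := by
    have : ∑ i, (Y i).1 = 1 := by simp [Y, Prod.fst_sum, Finset.sum_fiberwise s σ w, hw1]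
    simp only [hY, sum_const, card_univ, Fintype.card_fin, nsmul_eq_mul] at this
    nlinarith
  refine ⟨σ, (Y (Fin.last k)).1⁻¹ • (Y (Fin.last k)).2, mem_iInter.2 fun i => ?_⟩
  rw [← hY i] at hmass ⊢
  have hcm : (s.filter (σ · = i)).centerMass w a = (Y i).1⁻¹ • (Y i).2 := by
    simp [Finset.centerMass, Y, Prod.fst_sum, Prod.snd_sum]
  rw [← hcm]
  exact Finset.centerMass_mem_convexHull _ (fun j hj => hw0 j (Finset.mem_filter.1 hj).1)
    (by simpa [Y, Prod.fst_sum] using hmass) fun j hj => ⟨j, (Finset.mem_filter.1 hj).2, rfl⟩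

theorem tverberg_general (d r : ℕ) (hr : 2 ≤ r)
    (C : Finset (EuclideanSpace ℝ (Fin d)))
    (hC : C.card = (d + 1) * (r - 1) + 1) :
    ∃ A : Fin r → Finset (EuclideanSpace ℝ (Fin d)),
      (∀ i, A i ⊆ C) ∧
      (Pairwise fun i i' => Disjoint (A i) (A i')) ∧
      (⋂ i, convexHull ℝ (A i : Set (EuclideanSpace ℝ (Fin d)))).Nonempty := by
  classical
  obtain ⟨k, rfl⟩ : ∃ k, r = k + 1 := ⟨r - 1, by omega⟩
  obtain ⟨σ, p, hp⟩ :=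
    exists_iInter_convexHull_fiber_nonempty k ((↑) : C → EuclideanSpace ℝ (Fin d)) (by simp [hC])
  refine ⟨fun i => {x ∈ C | ∃ h : x ∈ C, σ ⟨x, h⟩ = i}, fun i => Finset.filter_subset _ _,
    fun i i' hii' => Finset.disjoint_filter.2 fun x _ ⟨_, hi⟩ ⟨_, hi'⟩ => hii' (hi.symm.trans hi'),
    p, ?_⟩
  convert hp using 5 with i
  ext x
  simp

/-- **Tverberg's theorem.**
Every set `C ⊂ ℝ^d` of `(d+1)(r-1)+1` points has `r` pairwise disjoint subsets
`A_1, …, A_r` with `⋂_{i=1}^r conv(A_i) ≠ ∅`. -/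
theorem tverberg (d r : ℕ) (hd : 1 ≤ d) (hr : 2 ≤ r)
    (C : Finset (EuclideanSpace ℝ (Fin d)))
    (hC : C.card = (d + 1) * (r - 1) + 1) :
    ∃ A : Fin r → Finset (EuclideanSpace ℝ (Fin d)),
      (∀ i, A i ⊆ C) ∧
      (Pairwise fun i i' => Disjoint (A i) (A i')) ∧
      (⋂ i, convexHull ℝ (A i : Set (EuclideanSpace ℝ (Fin d)))).Nonempty :=
  tverberg_general d r hr C hC
end

section
/- For every d ≥ 1 and r ≥ 2 there exists a set C ⊂ ℝ^d of (d+1)(r−1) points such that there do NOT exist r pairwise disjoint nonempty subsets A_1, …, A_r ⊆ C with ⋂_{i=1}^r conv(A_i) ≠ ∅. (Hence the number (d+1)(r−1)+1 in Tverberg's theorem is optimal; such a set is given by d+1 sufficiently small clusters of r−1 points each placed near the vertices of a regular d-simplex.) -/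
/-- **optimality of Tverberg's theorem.**
For every `d ≥ 1` and `r ≥ 2` there is a set `C ⊂ ℝ^d` of `(d+1)(r-1)` points
admitting no `r` pairwise disjoint nonempty subsets `A_1, …, A_r ⊆ C` with
`⋂_{i=1}^r conv(A_i) ≠ ∅`. -/
theorem tverberg_optimal (d r : ℕ) (hd : 1 ≤ d) (hr : 2 ≤ r) :
    ∃ C : Finset (EuclideanSpace ℝ (Fin d)),
      C.card = (d + 1) * (r - 1) ∧
      ¬ ∃ A : Fin r → Finset (EuclideanSpace ℝ (Fin d)),
          (∀ i, A i ⊆ C) ∧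
          (∀ i, (A i).Nonempty) ∧
          (Pairwise fun i i' => Disjoint (A i) (A i')) ∧
          (⋂ i, convexHull ℝ (A i : Set (EuclideanSpace ℝ (Fin d)))).Nonempty := by
  classical
  have hd1 : 0 < d := hd
  set ε : ℝ := 1 / ((d + 1) * r) with hε_def
  have hεpos : 0 < ε := by
    have : (0:ℝ) < (d+1) * r := by positivity
    positivity
  set δ : ℝ := 1 / ((d : ℝ) + 1) with hδ_def
  have hδpos : 0 < δ := by positivity
  let E := EuclideanSpace ℝ (Fin d)
  let e : Fin d → EuclideanSpace ℝ (Fin d) := fun i => EuclideanSpace.single i 1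
  let p : Fin (d+1) → Fin (r-1) → EuclideanSpace ℝ (Fin d) :=
    Fin.cons (fun k => ((k : ℝ) * ε) • e ⟨0, hd1⟩)
      (fun j k => (1 + (k : ℝ) * ε) • e j)
  let g : Fin (d+1) → EuclideanSpace ℝ (Fin d) → ℝ :=
    Fin.cons (fun x => 1 - ∑ i, x i) (fun j x => x j)
  have hp0 : ∀ (k : Fin (r-1)) (b : Fin d),
      p 0 k b = if b = ⟨0, hd1⟩ then (k:ℝ) * ε else 0 := by
    intro k b
    simp [p, e, PiLp.smul_apply, EuclideanSpace.single_apply, mul_ite]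
  have hps : ∀ (j : Fin d) (k : Fin (r-1)) (b : Fin d),
      p (Fin.succ j) k b = if b = j then 1 + (k:ℝ) * ε else 0 := by
    intro j k b
    simp [p, e, PiLp.smul_apply, EuclideanSpace.single_apply, mul_ite]
  have hksmall : ∀ k : Fin (r-1), (k:ℝ) * ε < δ := by
    intro k
    have hk : (k:ℝ) < r := by
      have h1 : (k:ℕ) < r := by have := k.isLt; omega
      exact_mod_cast h1
    have h1 : (k:ℝ) * ε < r * ε := mul_lt_mul_of_pos_right hk hεpos
    have h2 : (r:ℝ) * ε = δ := by
      rw [hε_def, hδ_def]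
      have hr0 : (r:ℝ) ≠ 0 := by positivity
      have hd0 : (d:ℝ) + 1 ≠ 0 := by positivity
      field_simp
    linarith
  have hδle1 : δ ≤ 1 := by
    rw [hδ_def]
    rw [div_le_one (by positivity)]
    have : (0:ℝ) ≤ (d:ℝ) := Nat.cast_nonneg d
    linarith
  have hknn : ∀ k : Fin (r-1), (0:ℝ) ≤ (k:ℝ) * ε := by
    intro k; positivity
  -- value bounds
  have hval : ∀ (j j' : Fin (d+1)) (k : Fin (r-1)), j ≠ j' → g j (p j' k) < δ := by
    intro j j' k hne
    induction j using Fin.cases with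
    | zero =>
      induction j' using Fin.cases with
      | zero => exact absurd rfl hne
      | succ j' =>
        have hsum : ∑ i, p (Fin.succ j') k i = 1 + (k:ℝ) * ε := by
          simp [hps]
        have : g 0 (p (Fin.succ j') k) = -((k:ℝ) * ε) := by
          simp [g, hsum]
        rw [this]
        have := hknn k
        linarith
    | succ j =>
      induction j' using Fin.cases with
      | zero =>
        have : g (Fin.succ j) (p 0 k) = if j = ⟨0, hd1⟩ then (k:ℝ) * ε else 0 := by
          simp [g, hp0]
        rw [this]
        split
        · exact hksmall k
        · exact hδpos
      | succ j' =>
        have hjj' : j ≠ j' := by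
          rintro rfl; exact hne rfl
        have : g (Fin.succ j) (p (Fin.succ j') k) = 0 := by
          simp [g, hps, hjj']
        rw [this]; exact hδpos
  have hgsum : ∀ x : EuclideanSpace ℝ (Fin d), ∑ j, g j x = 1 := by
    intro x
    rw [Fin.sum_univ_succ]
    simp only [g, Fin.cons_zero, Fin.cons_succ]
    ring
  have hsum_lin : IsLinearMap ℝ (fun x : EuclideanSpace ℝ (Fin d) => ∑ i, x i) := by
    constructor
    · intro a b; simp [Finset.sum_add_distrib]
    · intro c a; simp [Finset.mul_sum]
  have hconv : ∀ (j : Fin (d+1)) (c : ℝ),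
      Convex ℝ {x : EuclideanSpace ℝ (Fin d) | g j x < c} := by
    intro j c
    induction j using Fin.cases with
    | zero =>
      have hset : {x : EuclideanSpace ℝ (Fin d) | g 0 x < c}
          = {x : EuclideanSpace ℝ (Fin d) | 1 - c < (fun x : EuclideanSpace ℝ (Fin d) => ∑ i, x i) x} := by
        ext y
        simp only [g, Fin.cons_zero, Set.mem_setOf_eq]
        constructor <;> intro <;> linarith
      rw [hset]
      exact convex_halfSpace_gt hsum_lin _
    | succ j =>
      have hset : {x : EuclideanSpace ℝ (Fin d) | g (Fin.succ j) x < c}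
          = {x : EuclideanSpace ℝ (Fin d) | (fun x : EuclideanSpace ℝ (Fin d) => x j) x < c} := by
        ext y
        simp [g]
      rw [hset]
      exact convex_halfSpace_lt ⟨fun a b => rfl, fun t a => rfl⟩ _
  -- injectivity
  have hfin : ∀ (k k' : Fin (r-1)), (k:ℝ) * ε = (k':ℝ) * ε → k = k' := by
    intro k k' h
    have h1 : (k:ℝ) = (k':ℝ) := mul_right_cancel₀ (ne_of_gt hεpos) h
    have h2 : (k:ℕ) = (k':ℕ) := by exact_mod_cast h1
    exact Fin.ext h2
  have hinj : Function.Injective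
      (fun jk : Fin (d+1) × Fin (r-1) => p jk.1 jk.2) := by
    rintro ⟨j, k⟩ ⟨j', k'⟩ h
    change p j k = p j' k' at h
    induction j using Fin.cases with
    | zero =>
      induction j' using Fin.cases with
      | zero =>
        have := congrArg (fun v : EuclideanSpace ℝ (Fin d) => v ⟨0, hd1⟩) h
        simp only [hp0, if_pos rfl] at this
        rw [hfin _ _ this]
      | succ j' =>
        exfalso
        have := congrArg (fun v : EuclideanSpace ℝ (Fin d) => ∑ i, v i) h
        simp only [hp0, hps] at this
        rw [Finset.sum_ite_eq' Finset.univ, Finset.sum_ite_eq' Finset.univ] at this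
        simp at this
        have h1 := hksmall k
        have h2 := hknn k'
        linarith
    | succ j =>
      induction j' using Fin.cases with
      | zero =>
        exfalso
        have := congrArg (fun v : EuclideanSpace ℝ (Fin d) => ∑ i, v i) h
        simp only [hp0, hps] at this
        rw [Finset.sum_ite_eq' Finset.univ, Finset.sum_ite_eq' Finset.univ] at this
        simp at this
        have h1 := hksmall k'
        have h2 := hknn k
        linarith
      | succ j' =>
        have hj := congrArg (fun v : EuclideanSpace ℝ (Fin d) => v j) h
        simp only [hps, if_true] at hj
        by_cases hjj : j = j'
        · subst hjj
          rw [if_pos rfl] at hj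
          have : (k:ℝ) * ε = (k':ℝ) * ε := by linarith
          rw [hfin _ _ this]
        · rw [if_neg hjj] at hj
          exfalso
          have := hknn k
          linarith
  refine ⟨Finset.image (fun jk : Fin (d+1) × Fin (r-1) => p jk.1 jk.2) Finset.univ, ?_, ?_⟩
  · rw [Finset.card_image_of_injective _ hinj, Finset.card_univ]
    simp
  rintro ⟨A, hAC, hAne, hAdisj, x, hx⟩
  rw [Set.mem_iInter] at hx
  -- pigeonhole
  have hmiss : ∀ j : Fin (d+1), ∃ i : Fin r, ∀ k, p j k ∉ A i := by
    intro j
    by_contra hcon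
    push_neg at hcon
    choose f hf using hcon
    have hcard : Fintype.card (Fin (r-1)) < Fintype.card (Fin r) := by
      simp; omega
    obtain ⟨i, i', hne, heq⟩ := Fintype.exists_ne_map_eq_of_card_lt f hcard
    exact (Finset.disjoint_left.mp (hAdisj hne)) (hf i) (heq ▸ hf i')
  have hxlt : ∀ j : Fin (d+1), g j x < δ := by
    intro j
    obtain ⟨i, hi⟩ := hmiss j
    have hsub : (A i : Set (EuclideanSpace ℝ (Fin d)))
        ⊆ {y : EuclideanSpace ℝ (Fin d) | g j y < δ} := by
      intro a ha
      have haC : a ∈ Finset.image (fun jk : Fin (d+1) × Fin (r-1) => p jk.1 jk.2) Finset.univ :=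
        hAC i ha
      obtain ⟨⟨j', k⟩, -, hjk⟩ := Finset.mem_image.mp haC
      have hjj' : j ≠ j' := by
        rintro rfl
        exact hi k (by rw [show p j k = a from hjk] at *; exact ha)
      have := hval j j' k hjj'
      simpa [← hjk] using this
    exact convexHull_min hsub (hconv j δ) (hx i)
  have h1 : ∑ j : Fin (d+1), g j x < ∑ _j : Fin (d+1), δ :=
    Finset.sum_lt_sum_of_nonempty Finset.univ_nonempty (fun j _ => hxlt j)
  rw [hgsum x, Finset.sum_const, Finset.card_univ] at h1
  simp only [Fintype.card_fin, nsmul_eq_mul] at h1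
  have h2 : ((d:ℝ) + 1) * δ = 1 := by
    rw [hδ_def]; field_simp
  push_cast at h1
  linarith
end

section
/- (Sarkaria–Onn lemma) Let 𝒫 = (P_1, …, P_r) be an r-partition in ℝ^d. Then ⋂_{i=1}^r conv(P_i) ≠ ∅ if and only if 0 ∈ S_𝒫 = conv(Φ(𝒫)). -/
open Finset

namespace BMZ

noncomputable section

/-- Points of `ℝ^d`. -/
abbrev Pt (d : ℕ) := EuclideanSpace ℝ (Fin d)

/-- The space `ℝ^N`, `N = (d+1)(r-1)`, with `r = s+2`, presented with double
indices `(k, l) ∈ [d+1] × [r-1]`. -/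
abbrev CSp (d s : ℕ) := EuclideanSpace ℝ (Fin (d + 1) × Fin (s + 1))

/-- `w` is the vertex set of a regular `(r-1)`-dimensional simplex centered at the
origin (here `r = s+2`): the vertices are affinely independent, pairwise
equidistant with a positive common distance, and their barycenter is the origin. -/
def IsRegularSimplex {s : ℕ} (w : Fin (s + 2) → EuclideanSpace ℝ (Fin (s + 1))) : Prop :=
  AffineIndependent ℝ w ∧
    (∃ e : ℝ, 0 < e ∧ ∀ i j, i ≠ j → dist (w i) (w j) = e) ∧
    ∑ i, w i = 0

/-- `x⁺ = (x, 1) ∈ ℝ^{d+1}`. -/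
def xplus {d : ℕ} (x : Pt d) : Fin (d + 1) → ℝ := Fin.snoc (x : Fin d → ℝ) 1

/-- The `i`-th clone `φ_i(x) := x⁺ ⊗ w_i ∈ ℝ^N`. -/
def clone {d s : ℕ} (w : Fin (s + 2) → EuclideanSpace ℝ (Fin (s + 1)))
    (x : Pt d) (i : Fin (s + 2)) : CSp d s :=
  WithLp.toLp 2 fun kl : Fin (d + 1) × Fin (s + 1) => xplus x kl.1 * w i kl.2

/-- The Sarkaria–Onn transform `Φ(𝒫)` of an `r`-partition `𝒫 = (P_1, …, P_r)`:
for every point `p ∈ P_i` we put the `i`-th clone of `p` into `Φ(𝒫)`. -/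
def Phi {d s : ℕ} (w : Fin (s + 2) → EuclideanSpace ℝ (Fin (s + 1)))
    (P : Fin (s + 2) → Finset (Pt d)) : Set (CSp d s) :=
  ⋃ i, (fun p => clone w p i) '' (P i : Set (Pt d))

/-- `N = (d+1)(r-1)`, the number of points of a BMZ-collection other than `z`. -/
abbrev NN (d s : ℕ) : ℕ := (d + 1) * (s + 1)

/-- Indices of the points `c_1, …, c_{N+1}` of a BMZ-collection (the last point
is `z`). A BMZ-collection is an injective map `c : Idx d s → Pt d`, with the color
classes `C_1, …, C_{d+2}` consisting of consecutive points as given by `colorOf`. -/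
abbrev Idx (d s : ℕ) := Fin (NN d s + 1)

/-- The color of the `i`-th point: each of the first `d+1` classes consists of
`r-1` consecutive points, and the last class is the singleton `{z}`. -/
def colorOf (d s : ℕ) (i : Idx d s) : Fin (d + 2) :=
  if h : (i : ℕ) < NN d s then
    Fin.castSucc ⟨(i : ℕ) / (s + 1),
      Nat.div_lt_of_lt_mul (by rw [Nat.mul_comm]; exact h)⟩
  else Fin.last (d + 1)

/-- Maximal rainbow `r`-partitions `ℛ = (R_1, …, R_r) ∈ 𝔅(𝒞)` (with `z ∈ R_r`) are
in bijective correspondence with tuples of permutations `π_k` of `[r]`, one for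
each of the first `d+1` colors: `π_k j` is the index of the class containing the
`j`-th point of `C_k` for `j ≤ r-1`, and `π_k r` is the index of the unique class
containing no point of `C_k`. -/
abbrev PartEnc (d s : ℕ) := Fin (d + 1) → Equiv.Perm (Fin (s + 2))

/-- The class of the `i`-th point in the partition encoded by `σ`; the point `z`
lies in the last class. -/
def classOf {d s : ℕ} (σ : PartEnc d s) (i : Idx d s) : Fin (s + 2) :=
  if h : (i : ℕ) < NN d s then
    σ ⟨(i : ℕ) / (s + 1), Nat.div_lt_of_lt_mul (by rw [Nat.mul_comm]; exact h)⟩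
      (Fin.castSucc ⟨(i : ℕ) % (s + 1), Nat.mod_lt _ (Nat.succ_pos s)⟩)
  else Fin.last (s + 1)

variable {d s : ℕ}

open Classical in
/-- The `k`-th color class of the configuration `c`, as a finite set of points. -/
def colorClass (c : Idx d s → Pt d) (k : Fin (d + 2)) : Finset (Pt d) :=
  (Finset.univ.filter fun i => colorOf d s i = k).image c

open Classical in
/-- The class `R_i` of the partition encoded by `σ`, as a finite set of points. -/
def classSet (c : Idx d s → Pt d) (σ : PartEnc d s) (i : Fin (s + 2)) : Finset (Pt d) :=
  (Finset.univ.filter fun j => classOf σ j = i).image c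

/-- `σ` encodes a Tverberg partition: the convex hulls of its classes have a
common point. -/
def IsTverberg (c : Idx d s → Pt d) (σ : PartEnc d s) : Prop :=
  (⋂ i, convexHull ℝ (classSet c σ i : Set (Pt d))).Nonempty

/-- The clones of all the points of the configuration, w.r.t. the partition `σ`. -/
def allClones (w : Fin (s + 2) → EuclideanSpace ℝ (Fin (s + 1)))
    (c : Idx d s → Pt d) (σ : PartEnc d s) : Idx d s → CSp d s :=
  fun i => clone w (c i) (classOf σ i)

/-- The vertices of `F_ℛ = conv Φ(ℛ - z)`, ordered by the numbering of the points. -/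
def rows (w : Fin (s + 2) → EuclideanSpace ℝ (Fin (s + 1)))
    (c : Idx d s → Pt d) (σ : PartEnc d s) : Fin (NN d s) → CSp d s :=
  fun i => allClones w c σ i.castSucc

/-- `Φ(ℛ - a)`: the clones of all points except `a`. -/
def PhiMinus (w : Fin (s + 2) → EuclideanSpace ℝ (Fin (s + 1)))
    (c : Idx d s → Pt d) (σ : PartEnc d s) (a : Idx d s) : Set (CSp d s) :=
  allClones w c σ '' {i | i ≠ a}

/-- The simplex `F_ℛ = conv Φ(ℛ - z)`. -/
def Fface (w : Fin (s + 2) → EuclideanSpace ℝ (Fin (s + 1)))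
    (c : Idx d s → Pt d) (σ : PartEnc d s) : Set (CSp d s) :=
  convexHull ℝ (Set.range (rows w c σ))

/-- `𝒞` is in sufficiently general position: each `Φ(ℛ - z)` is affinely
independent, and `0 ∉ aff Φ(ℛ - a)` for all `ℛ ∈ 𝔅(𝒞)` and `a ∈ C`. -/
def SuffGenPos (w : Fin (s + 2) → EuclideanSpace ℝ (Fin (s + 1)))
    (c : Idx d s → Pt d) : Prop :=
  (∀ σ : PartEnc d s, AffineIndependent ℝ (rows w c σ)) ∧
  (∀ (σ : PartEnc d s) (a : Idx d s), (0 : CSp d s) ∉ affineSpan ℝ (PhiMinus w c σ a))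

/-- A ridge `conv Φ(ℛ - z - a)`, `a ∈ C \ {z}`. -/
def ridge (w : Fin (s + 2) → EuclideanSpace ℝ (Fin (s + 1)))
    (c : Idx d s → Pt d) (σ : PartEnc d s) (a : Fin (NN d s)) : Set (CSp d s) :=
  convexHull ℝ (rows w c σ '' {i | i ≠ a})

/-- `𝒞` is in almost general position: all ridges avoid the origin. -/
def AlmostGenPos (w : Fin (s + 2) → EuclideanSpace ℝ (Fin (s + 1)))
    (c : Idx d s → Pt d) : Prop :=
  ∀ (σ : PartEnc d s) (a : Fin (NN d s)), (0 : CSp d s) ∉ ridge w c σ a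

/-- The ray emanating from `0` in the direction `u`. -/
def raySet (u : CSp d s) : Set (CSp d s) := {x | ∃ t : ℝ, 0 ≤ t ∧ x = t • u}

/-- A ray emanating from `0` is generic for `𝒞` if it intersects no ridge. -/
def GenericRay (w : Fin (s + 2) → EuclideanSpace ℝ (Fin (s + 1)))
    (c : Idx d s → Pt d) (u : CSp d s) : Prop :=
  ∀ (σ : PartEnc d s) (a : Fin (NN d s)), ∀ x ∈ raySet u, x ∉ ridge w c σ a

/-- The combinatorial sign `csgn(ℛ) = ∏_k sgn(π_k)`. -/
def csgn (σ : PartEnc d s) : ℤ := ∏ k, (Equiv.Perm.sign (σ k) : ℤ)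

/-- The sign of a real number, as an integer. -/
def sgnR (x : ℝ) : ℤ := if 0 < x then 1 else if x < 0 then -1 else 0

/-- The geometric sign `gsgn(ℛ)`: the sign of the determinant of the `N × N`
matrix whose rows are the vertices of `F_ℛ`, ordered by the numbering of the
points of `C`. -/
def gsgn (w : Fin (s + 2) → EuclideanSpace ℝ (Fin (s + 1)))
    (c : Idx d s → Pt d) (σ : PartEnc d s) : ℤ :=
  sgnR (Matrix.det (Matrix.of fun i j : Fin (NN d s) =>
    rows w c σ i (finProdFinEquiv.symm j)))

/-- The sign `sgn(ℛ) = gsgn(ℛ) ⬝ csgn(ℛ)`. -/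
def psgn (w : Fin (s + 2) → EuclideanSpace ℝ (Fin (s + 1)))
    (c : Idx d s → Pt d) (σ : PartEnc d s) : ℤ :=
  gsgn w c σ * csgn σ

/-- `z* = φ_r(z)`. -/
def zstar (w : Fin (s + 2) → EuclideanSpace ℝ (Fin (s + 1)))
    (c : Idx d s → Pt d) : CSp d s :=
  clone w (c (Fin.last (NN d s))) (Fin.last (s + 1))

open Classical in
/-- The degree of `𝒞` measured along the ray from `0` in direction `u`:
`deg_ψ(𝒞) = Σ_{ℛ ∈ 𝔅(𝒞), ψ ∩ F_ℛ ≠ ∅} sgn(ℛ)`. -/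
def degRay (w : Fin (s + 2) → EuclideanSpace ℝ (Fin (s + 1)))
    (c : Idx d s → Pt d) (u : CSp d s) : ℤ :=
  ∑ σ : PartEnc d s, if (raySet u ∩ Fface w c σ).Nonempty then psgn w c σ else 0

/-- The degree `deg(𝒞)`, measured along the ray `ρ` emanating from `0` in the
direction `-z*`. -/
def degC (w : Fin (s + 2) → EuclideanSpace ℝ (Fin (s + 1)))
    (c : Idx d s → Pt d) : ℤ :=
  degRay w c (-(zstar w c))

end

end BMZ

/-! As each `φ_i` is affine, `0 ∈ S_𝒫` means `0 = ∑ t_i • φ_i(y_i)` for a convex combination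
with `y_i ∈ conv P_i` whenever `t_i > 0`. Since `t • φ_i(y) = (t • y⁺) ⊗ w_i`, such a sum vanishes
iff the vectors `t_i • y_i⁺` all coincide: the only linear relations among the vertices of a
simplex centred at the origin are the constant ones. The last coordinates then force `t_i = 1/r`,
so all `y_i` coincide in a common point of the `conv P_i`; conversely a common point `x` gives
`0 = ∑ (1/r) • φ_i(x)`. -/

section ConvexAffine

variable {k V ι : Type*} [Fintype ι]

theorem AffineIndependent.sum_smul_eq_zero_iff [Field k] [CharZero k] [AddCommGroup V]
    [Module k V] {p : ι → V} (hp : AffineIndependent k p) (hsum : ∑ i, p i = 0) {c : ι → k} :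
    ∑ i, c i • p i = 0 ↔ ∀ i j, c i = c j := by
  refine ⟨fun hc i j => ?_, fun hc => ?_⟩
  · have : Nonempty ι := ⟨i⟩
    have hcard : (Fintype.card ι : k) ≠ 0 := Nat.cast_ne_zero.2 Fintype.card_ne_zero
    set m := (∑ i, c i) / Fintype.card ι
    -- the coefficients and their mean have the same total mass and give the same combination
    have hm := hp.eq_of_sum_eq_sum (s := univ) (w₁ := c) (w₂ := fun _ => m)
      (by simp [m, mul_div_cancel₀ _ hcard]) (by rw [hc, ← smul_sum, hsum, smul_zero])
    rw [hm i (mem_univ i), hm j (mem_univ j)]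
  · cases isEmpty_or_nonempty ι
    · simp
    · obtain ⟨i₀⟩ := ‹Nonempty ι›
      simp_rw [hc _ i₀, ← smul_sum, hsum, smul_zero]

variable {R E : Type*} [Field R] [LinearOrder R] [IsStrictOrderedRing R] [AddCommGroup E]
  [Module R E]

theorem exists_sum_smul_eq_of_mem_convexHull_iUnion {s : ι → Set E} {x : E}
    (hx : x ∈ convexHull R (⋃ i, s i)) :
    ∃ (t : ι → R) (y : ι → E), (∀ i, 0 ≤ t i) ∧ ∑ i, t i = 1 ∧
      (∀ i, 0 < t i → y i ∈ convexHull R (s i)) ∧ ∑ i, t i • y i = x := by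
  classical
  obtain ⟨κ, _, a, z, ha₀, ha₁, hz, rfl⟩ := mem_convexHull_iff_exists_fintype.mp hx
  choose part hpart using fun j => Set.mem_iUnion.mp (hz j)
  refine ⟨fun i => ∑ j with part j = i, a j, fun i => centerMass {j | part j = i} a z,
    fun i => sum_nonneg fun j _ => ha₀ j, (sum_fiberwise univ part a).trans ha₁,
    fun i hi => centerMass_mem_convexHull _ (fun j _ => ha₀ j) hi
      fun j hj => (mem_filter.mp hj).2 ▸ hpart j, ?_⟩
  rw [← sum_fiberwise univ part fun j => a j • z j]
  refine sum_congr rfl fun i _ => ?_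
  dsimp only
  by_cases hi : ∑ j with part j = i, a j = 0
  · have ha := (sum_eq_zero_iff_of_nonneg fun j _ => ha₀ j).mp hi
    rw [hi, zero_smul, sum_eq_zero fun j hj => by rw [ha j hj, zero_smul]]
  · exact smul_inv_smul₀ hi _

end ConvexAffine

namespace BMZ

variable {d s : ℕ}

theorem xplus_injective : Function.Injective (xplus : Pt d → Fin (d + 1) → ℝ) := by
  intro x y h
  ext k
  simpa [xplus] using congrFun h k.castSucc

def cloneAffine (w : Fin (s + 2) → EuclideanSpace ℝ (Fin (s + 1))) (i : Fin (s + 2)) :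
    Pt d →ᵃ[ℝ] CSp d s where
  toFun x := clone w x i
  linear :=
    { toFun := fun v =>
        WithLp.toLp 2 fun kl => (Fin.snoc (v : Fin d → ℝ) 0 : Fin (d + 1) → ℝ) kl.1 * w i kl.2
      map_add' := fun u v => by
        ext ⟨k, l⟩
        induction k using Fin.lastCases <;> simp [add_mul]
      map_smul' := fun a v => by
        ext ⟨k, l⟩
        induction k using Fin.lastCases <;> simp [mul_assoc] }
  map_vadd' x v := by
    ext ⟨k, l⟩
    induction k using Fin.lastCases <;> simp [clone, xplus, add_mul]

theorem sum_smul_clone_eq_zero_iff {w : Fin (s + 2) → EuclideanSpace ℝ (Fin (s + 1))}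
    (haff : AffineIndependent ℝ w) (hsum : ∑ i, w i = 0) {t : Fin (s + 2) → ℝ}
    {x : Fin (s + 2) → Pt d} :
    ∑ i, t i • clone w (x i) i = 0 ↔ ∀ i j, t i • xplus (x i) = t j • xplus (x j) := by
  have hcoord : ∀ k l,
      (∑ i, t i • clone w (x i) i) (k, l) = (∑ i, (t i • xplus (x i)) k • w i) l :=
    fun k l => by simp [clone, mul_assoc]
  calc ∑ i, t i • clone w (x i) i = 0 ↔ ∀ k, ∑ i, (t i • xplus (x i)) k • w i = 0 := by
        simp only [PiLp.ext_iff, Prod.forall, hcoord, PiLp.zero_apply]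
    _ ↔ ∀ k i j, (t i • xplus (x i)) k = (t j • xplus (x j)) k :=
        forall_congr' fun k => haff.sum_smul_eq_zero_iff hsum
    _ ↔ ∀ i j, t i • xplus (x i) = t j • xplus (x j) := by
        simp only [funext_iff]
        exact ⟨fun h i j k => h k i j, fun h k i j => h i j k⟩

theorem pos_and_eq_of_sum_smul_clone_eq_zero
    {w : Fin (s + 2) → EuclideanSpace ℝ (Fin (s + 1))} (haff : AffineIndependent ℝ w)
    (hsum : ∑ i, w i = 0) {t : Fin (s + 2) → ℝ} (ht : ∑ i, t i = 1) {x : Fin (s + 2) → Pt d}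
    (h : ∑ i, t i • clone w (x i) i = 0) : (∀ i, 0 < t i) ∧ ∀ i, x i = x 0 := by
  have hconst := (sum_smul_clone_eq_zero_iff haff hsum).mp h
  have ht_eq : ∀ i j, t i = t j := fun i j => by
    simpa [xplus] using congrFun (hconst i j) (Fin.last d)
  have ht_pos : ∀ i, 0 < t i := fun i => by
    have : (s + 2 : ℝ) * t i = 1 := by
      rw [← ht]
      simp [ht_eq _ i]
    exact (pos_iff_pos_of_mul_pos (this ▸ one_pos)).mp (by positivity)
  refine ⟨ht_pos, fun i => xplus_injective ?_⟩
  exact smul_right_injective _ (ht_pos i).ne' ((hconst i 0).trans (by rw [ht_eq 0 i]))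

end BMZ

open BMZ in
theorem sarkaria_onn_general (d s : ℕ)
    (w : Fin (s + 2) → EuclideanSpace ℝ (Fin (s + 1))) (hw : IsRegularSimplex w)
    (P : Fin (s + 2) → Finset (Pt d)) :
    (⋂ i, convexHull ℝ (P i : Set (Pt d))).Nonempty ↔
      (0 : CSp d s) ∈ convexHull ℝ (Phi w P) := by
  obtain ⟨haff, -, hsum⟩ := hw
  have hPhi : Phi w P = ⋃ i, cloneAffine w i '' (P i : Set (Pt d)) := rfl
  constructor
  · rintro ⟨x, hx⟩
    have h0 : ∑ i, (s + 2 : ℝ)⁻¹ • clone w x i = 0 :=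
      (sum_smul_clone_eq_zero_iff haff hsum (x := fun _ => x)).mpr fun _ _ => rfl
    rw [← h0, hPhi]
    refine (convex_convexHull ℝ _).sum_mem (fun _ _ => by positivity) (by simp [field])
      fun i _ => convexHull_mono (Set.subset_iUnion _ i) ?_
    rw [← AffineMap.image_convexHull]
    exact ⟨x, Set.mem_iInter.mp hx i, rfl⟩
  · intro h0
    rw [hPhi] at h0
    obtain ⟨t, y, ht₀, ht₁, hy, hty⟩ := exists_sum_smul_eq_of_mem_convexHull_iUnion h0
    simp_rw [← AffineMap.image_convexHull, Set.mem_image] at hy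
    choose! x hx using hy
    have hx0 : ∑ i, t i • clone w (x i) i = 0 := hty ▸ sum_congr rfl fun i _ => by
      rcases (ht₀ i).eq_or_lt with hi | hi
      · simp [← hi]
      · exact congrArg _ (hx i hi).2
    obtain ⟨ht_pos, hx_eq⟩ := pos_and_eq_of_sum_smul_clone_eq_zero haff hsum ht₁ hx0
    exact ⟨x 0, Set.mem_iInter.mpr fun i => hx_eq i ▸ (hx i (ht_pos i)).1⟩

open BMZ in
/-- **Sarkaria–Onn lemma.**
Let `𝒫 = (P_1, …, P_r)` be an `r`-partition in `ℝ^d` (here `r = s+2 ≥ 2`).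
Then `⋂_i conv(P_i) ≠ ∅` if and only if `0 ∈ S_𝒫 = conv(Φ(𝒫))`. -/
theorem sarkaria_onn (d s : ℕ) (hd : 1 ≤ d)
    (w : Fin (s + 2) → EuclideanSpace ℝ (Fin (s + 1))) (hw : IsRegularSimplex w)
    (P : Fin (s + 2) → Finset (Pt d))
    (hP : Pairwise fun i i' => Disjoint (P i) (P i')) :
    (⋂ i, convexHull ℝ (P i : Set (Pt d))).Nonempty ↔
      (0 : CSp d s) ∈ convexHull ℝ (Phi w P) :=
  sarkaria_onn_general d s w hw P
end
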